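/- Let f : 2^V → R≥0 be a monotone submodular set function with f(∅) = 0 on a finite ground set V, and let s ≤ |V|. Let S_greedy be the set obtained by s steps of greedy selection, each step adding an element with maximal marginal gain. Then f(S_greedy) ≥ (1 − 1/e) · max_{|S| ≤ s} f(S). -/

import Mathlib

/-! Write `Δ(x | G) = f (G ∪ {x}) - f G`. Each greedy step closes at least a `1/k`-fraction of
the gap `f S - f G` to any competitor `S` with `|S| ≤ k`: by monotonicity and submodularity
`f S - f G ≤ ∑_{y ∈ S} Δ(y | G) ≤ k · Δ(x | G)` for the greedy choice `x`. Hence after `k` steps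
the gap is at most `(1 - 1/k)^k f S ≤ e⁻¹ f S`. -/

open Finset

section Greedy

variable {α : Type*} [DecidableEq α] (f : Finset α → ℝ)

def marginalGain (B : Finset α) (x : α) : ℝ := f (insert x B) - f B

def IsGreedyChain (V : Finset α) (g : ℕ → Finset α) (s : ℕ) : Prop :=
  ∀ t < s, ∃ x ∈ V, g (t + 1) = insert x (g t) ∧
    ∀ y ∈ V, marginalGain f (g t) y ≤ marginalGain f (g t) x

variable {f}

lemma marginalGain_nonneg (hmono : ∀ S T : Finset α, S ⊆ T → f S ≤ f T)
    (B : Finset α) (x : α) : 0 ≤ marginalGain f B x :=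
  sub_nonneg.2 (hmono _ _ (subset_insert x B))

lemma le_add_sum_marginalGain
    (hsub : ∀ S T : Finset α, S ⊆ T → ∀ x ∉ T, marginalGain f T x ≤ marginalGain f S x)
    (B S : Finset α) : f (S ∪ B) ≤ f B + ∑ x ∈ S, marginalGain f B x := by
  induction S using Finset.induction_on with
  | empty => simp
  | @insert a S ha ih =>
    rw [sum_insert ha, insert_union]
    by_cases haSB : a ∈ S ∪ B
    · have haB : a ∈ B := (mem_union.1 haSB).resolve_left ha
      have : marginalGain f B a = 0 := by simp [marginalGain, insert_eq_of_mem haB]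
      rw [insert_eq_of_mem haSB, this]
      linarith
    · have : f (insert a (S ∪ B)) - f (S ∪ B) ≤ marginalGain f B a :=
        hsub B (S ∪ B) subset_union_right a haSB
      linarith

lemma sub_le_card_mul_marginalGain (hmono : ∀ S T : Finset α, S ⊆ T → f S ≤ f T)
    (hsub : ∀ S T : Finset α, S ⊆ T → ∀ x ∉ T, marginalGain f T x ≤ marginalGain f S x)
    {B S : Finset α} {x : α} (hx : ∀ y ∈ S, marginalGain f B y ≤ marginalGain f B x) :
    f S - f B ≤ #S * marginalGain f B x := by
  have hsum : ∑ y ∈ S, marginalGain f B y ≤ #S * marginalGain f B x := by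
    simpa using sum_le_sum hx
  linarith [hmono S (S ∪ B) subset_union_left, le_add_sum_marginalGain hsub B S]

/-- The case `k = 0` is harmless: then `1 - 1 / k = 1` since `1 / 0 = 0`. -/
lemma sub_insert_le_of_isMax_marginalGain (hmono : ∀ S T : Finset α, S ⊆ T → f S ≤ f T)
    (hsub : ∀ S T : Finset α, S ⊆ T → ∀ x ∉ T, marginalGain f T x ≤ marginalGain f S x)
    {B S : Finset α} {x : α} {k : ℕ} (hSk : #S ≤ k)
    (hx : ∀ y ∈ S, marginalGain f B y ≤ marginalGain f B x) :
    f S - f (insert x B) ≤ (1 - 1 / k) * (f S - f B) := by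
  have hgain := marginalGain_nonneg hmono B x
  have hgap : f S - f B ≤ marginalGain f B x * k := by
    rw [mul_comm]
    calc f S - f B ≤ #S * marginalGain f B x := sub_le_card_mul_marginalGain hmono hsub hx
      _ ≤ k * marginalGain f B x := by gcongr
  have hfrac : (f S - f B) / k ≤ marginalGain f B x :=
    div_le_of_le_mul₀ k.cast_nonneg hgain hgap
  unfold marginalGain at hfrac
  linarith [show (1 - 1 / (k : ℝ)) * (f S - f B) = f S - f B - (f S - f B) / k by ring]

lemma sub_le_pow_mul_of_isGreedyChain (hmono : ∀ S T : Finset α, S ⊆ T → f S ≤ f T)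
    (hsub : ∀ S T : Finset α, S ⊆ T → ∀ x ∉ T, marginalGain f T x ≤ marginalGain f S x)
    {V S : Finset α} {g : ℕ → Finset α} {s k : ℕ} (hg : IsGreedyChain f V g s)
    (hSV : S ⊆ V) (hSk : #S ≤ k) :
    f S - f (g s) ≤ (1 - 1 / k) ^ s * (f S - f (g 0)) := by
  have hk : (0 : ℝ) ≤ 1 - 1 / k := by
    rw [sub_nonneg, one_div]
    exact Nat.cast_inv_le_one k
  refine le_geom (u := fun t => f S - f (g t)) hk s fun t ht => ?_
  obtain ⟨x, -, hgt, hx⟩ := hg t ht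
  rw [hgt]
  exact sub_insert_le_of_isMax_marginalGain hmono hsub hSk fun y hy => hx y (hSV hy)

end Greedy

theorem greedy_submodular_guarantee_general {α : Type} [DecidableEq α]
    (V : Finset α) (f : Finset α → ℝ)
    (hmono : ∀ S T : Finset α, S ⊆ T → f S ≤ f T)
    (hsub : ∀ S T : Finset α, S ⊆ T → ∀ x ∉ T,
      f (insert x T) - f T ≤ f (insert x S) - f S)
    (hempty : f ∅ = 0)
    (s : ℕ)
    (g : ℕ → Finset α) (hg0 : g 0 = ∅)
    (hgreedy : ∀ t < s, ∃ x ∈ V, g (t + 1) = insert x (g t) ∧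
      ∀ y ∈ V, f (insert y (g t)) - f (g t) ≤ f (insert x (g t)) - f (g t)) :
    ∀ S ⊆ V, S.card ≤ s → (1 - (Real.exp 1)⁻¹) * f S ≤ f (g s) := by
  intro S hSV hSs
  obtain rfl | hs := Nat.eq_zero_or_pos s
  · rw [card_eq_zero.1 (Nat.le_zero.1 hSs), hg0, hempty, mul_zero]
  have hfS : 0 ≤ f S := hempty ▸ hmono ∅ S (empty_subset S)
  have hgap := sub_le_pow_mul_of_isGreedyChain hmono hsub hgreedy hSV hSs
  rw [hg0, hempty, sub_zero] at hgap
  have hdecay : (1 - 1 / (s : ℝ)) ^ s ≤ (Real.exp 1)⁻¹ := by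
    simpa [Real.exp_neg] using
      Real.one_sub_div_pow_le_exp_neg (n := s) (t := 1) (by exact_mod_cast hs)
  nlinarith [mul_le_mul_of_nonneg_right hdecay hfS]

/-- Nemhauser–Wolsey–Fisher greedy guarantee: for a non-negative monotone
submodular set function `f` with `f ∅ = 0` on a finite ground set `V`, the set
obtained by `s` steps of greedy selection (each step adding an element of `V`
with maximal marginal gain) achieves at least `(1 − 1/e)` times the value of
any subset of `V` of cardinality at most `s`. -/
theorem greedy_submodular_guarantee {α : Type} [DecidableEq α]
    (V : Finset α) (f : Finset α → ℝ)
    (hmono : ∀ S T : Finset α, S ⊆ T → f S ≤ f T)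
    (hsub : ∀ S T : Finset α, S ⊆ T → ∀ x ∉ T,
      f (insert x T) - f T ≤ f (insert x S) - f S)
    (hempty : f ∅ = 0) (hnonneg : ∀ S, 0 ≤ f S)
    (s : ℕ) (hs : s ≤ V.card)
    (g : ℕ → Finset α) (hg0 : g 0 = ∅)
    (hgreedy : ∀ t < s, ∃ x ∈ V, g (t + 1) = insert x (g t) ∧
      ∀ y ∈ V, f (insert y (g t)) - f (g t) ≤ f (insert x (g t)) - f (g t)) :
    ∀ S ⊆ V, S.card ≤ s → (1 - (Real.exp 1)⁻¹) * f S ≤ f (g s) :=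
  greedy_submodular_guarantee_general V f hmono hsub hempty s g hg0 hgreedy
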